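/- Fix an integer n ≥ 2 and an integer K ≥ 2. Let (vm^(1), vM^(1)), …, (vm^(K), vM^(K)) be pairs of reals with vm^(k) < vM^(k) for each k, vm^(1) < ⋯ < vm^(K), and Δv^(1) < ⋯ < Δv^(K) where Δv^(k) = vM^(k) − vm^(k). Let (vm(t), vM(t)) be a piecewise-constant function of t ∈ [0,∞) taking values in {(vm^(k), vM^(k)) : 1 ≤ k ≤ K}, with finitely many switching times in each bounded interval, and let x : [0,∞) → ℝ be continuous, differentiable at every non-switching time, with x'(t) = −(1/(n(n−1)))·(x(t) − vm(t))/(vM(t) − vm(t)) there, and x(0) ∈ [vm^(1), vm^(K)]. Write Δv(t) = vM(t) − vm(t), and suppose the time-average path length satisfies liminf_{T→∞} (1/T)·∫_0^T |x'(t)| dt = L > 0. Then liminf_{T→∞} (1/T)·∫_0^T Δv(t)·x'(t) dt ≥ (L/2)·min_{1 ≤ k ≤ K−1} (Δv^(k+1) − Δv^(k)) > 0; consequently liminf_{T→∞} (1/T)·∫_0^T ((n−1)/n)·Δv(t)·x'(t) dt > 0, i.e., the time-averaged expected payoff of each bidder in the first-price auction strictly exceeds that in the second-price auction. -/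

import Mathlib

/-!
Off the switching times `x' = -(c / Δv) (x - vm)` with `c = 1 / (n (n - 1))`, so `x` moves towards
the current `vm`; hence `x` never leaves `[vm⁽¹⁾, vm⁽ᴷ⁾]`, and `Δv x' = -c (x - vm)` is bounded.
Take a monotone step function `H` jumping only at the points `vm⁽ᵏ⁾`, with `H ≤ Δv⁽ᵏ⁾ - g/2` below
`vm⁽ᵏ⁾` and `H ≥ Δv⁽ᵏ⁾ + g/2` above it; it exists because consecutive widths are at least `g`
apart. Since `x'` has the sign of `vm - x`, pointwise `(Δv - H x) x' ≥ (g/2) |x'|`. Integrating,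
`∫₀ᵀ H (x t) x' t dt = ∫_{x 0}^{x T} H` stays bounded, so
`∫₀ᵀ Δv x' ≥ (g/2) ∫₀ᵀ |x'| - C`; dividing by `T` gives the `liminf` bound. The chain rule for
`H ∘ x` fails only at countably many times (where `x` crosses a jump of `H`), which is harmless for
the fundamental theorem of calculus.
-/

open MeasureTheory Filter Set Topology

theorem countable_setOf_eq_of_hasDerivAt_ne_zero {f f' : ℝ → ℝ} {U : Set ℝ}
    (hf : ∀ t ∈ U, HasDerivAt f (f' t) t) (c : ℝ) :
    {t ∈ U | f t = c ∧ f' t ≠ 0}.Countable := by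
  set A := {t ∈ U | f t = c ∧ f' t ≠ 0}
  have : DiscreteTopology A := by
    refine discreteTopology_subtype_iff.2 fun t ht => inf_principal_eq_bot.2 ?_
    filter_upwards [(hf t ht.1).eventually_ne (c := c) ht.2.2] with s hs hsA
    exact hs hsA.2.1
  exact countable_coe_iff.1 (TopologicalSpace.separableSpace_iff_countable.1 inferInstance)

theorem LipschitzWith.hasDerivAt_comp_of_hasDerivAt_zero {𝕜 E F : Type*}
    [NontriviallyNormedField 𝕜] [NormedAddCommGroup E] [NormedSpace 𝕜 E] [NormedAddCommGroup F]
    [NormedSpace 𝕜 F] {G : E → F} {x : 𝕜 → E} {K : NNReal} {t : 𝕜}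
    (hG : LipschitzWith K G) (hx : HasDerivAt x 0 t) : HasDerivAt (G ∘ x) 0 t := by
  rw [hasDerivAt_iff_isLittleO] at hx ⊢
  simp only [smul_zero, sub_zero, Function.comp_apply] at hx ⊢
  refine (Asymptotics.IsBigO.of_bound K (Eventually.of_forall fun s => ?_)).trans_isLittleO hx
  simpa [dist_eq_norm] using hG.dist_le_mul (x s) (x t)

theorem lipschitzWith_primitive_of_abs_le {H : ℝ → ℝ} {C : ℝ}
    (hHi : ∀ y z : ℝ, IntervalIntegrable H volume y z) (hHC : ∀ y, |H y| ≤ C) (a : ℝ) :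
    LipschitzWith (Real.toNNReal C) fun y => ∫ u in a..y, H u := by
  refine LipschitzWith.of_dist_le_mul fun y z => ?_
  rw [Real.dist_eq, Real.dist_eq, intervalIntegral.integral_interval_sub_left (hHi a y) (hHi a z),
    Real.coe_toNNReal _ ((abs_nonneg _).trans (hHC 0))]
  exact intervalIntegral.norm_integral_le_of_norm_le_const fun u _ =>
    (Real.norm_eq_abs _).trans_le (hHC u)

theorem ae_restrict_Icc_of_forall_Ioo_diff {p : ℝ → Prop} {a b : ℝ} {S : Set ℝ}
    (hS : S.Countable) (h : ∀ t ∈ Ioo a b \ S, p t) : ∀ᵐ t ∂volume.restrict (Icc a b), p t := by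
  rw [Measure.restrict_congr_set Ioo_ae_eq_Icc.symm, ae_restrict_iff' measurableSet_Ioo]
  filter_upwards [measure_eq_zero_iff_ae_notMem.1 (hS.measure_zero volume)] with t htS ht
  exact h t ⟨ht, htS⟩

theorem aestronglyMeasurable_of_eventuallyEq_const {f : ℝ → ℝ} {a b : ℝ} {S : Set ℝ}
    (hS : S.Countable) (h : ∀ t ∈ Ioo a b \ S, ∀ᶠ s in 𝓝 t, f s = f t) :
    AEStronglyMeasurable f (volume.restrict (Icc a b)) := by
  have hcont : ContinuousOn f (Ioo a b \ S) := fun t ht =>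
    ((continuousAt_congr (h t ht)).2 continuousAt_const).continuousWithinAt
  rw [← Measure.restrict_congr_set ((sdiff_null_ae_eq_self (hS.measure_zero volume)).trans
    Ioo_ae_eq_Icc)]
  exact hcont.aestronglyMeasurable (measurableSet_Ioo.diff hS.measurableSet)

theorem intervalIntegrable_of_hasDerivAt_of_abs_le {x x' : ℝ → ℝ} {a b C : ℝ} {S : Set ℝ}
    (hab : a ≤ b) (hS : S.Countable) (hderiv : ∀ t ∈ Ioo a b \ S, HasDerivAt x (x' t) t)
    (hC : ∀ t ∈ Ioo a b \ S, |x' t| ≤ C) : IntervalIntegrable x' volume a b := by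
  rw [intervalIntegrable_iff_integrableOn_Icc_of_le hab]
  have hae : deriv x =ᵐ[volume.restrict (Icc a b)] x' :=
    ae_restrict_Icc_of_forall_Ioo_diff hS fun t ht => (hderiv t ht).deriv
  exact IntegrableOn.of_bound measure_Icc_lt_top
    ((measurable_deriv x).aestronglyMeasurable.congr hae) C
    (ae_restrict_Icc_of_forall_Ioo_diff hS fun t ht => (Real.norm_eq_abs _).trans_le (hC t ht))

theorem IntervalIntegrable.mul_of_eventuallyEq_const {f g : ℝ → ℝ} {a b B : ℝ} {S : Set ℝ}
    (hab : a ≤ b) (hS : S.Countable) (hf : ∀ t ∈ Ioo a b \ S, ∀ᶠ s in 𝓝 t, f s = f t)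
    (hg : IntervalIntegrable g volume a b) (hB : ∀ t ∈ Ioo a b \ S, |f t * g t| ≤ B) :
    IntervalIntegrable (fun t => f t * g t) volume a b := by
  rw [intervalIntegrable_iff_integrableOn_Icc_of_le hab] at hg ⊢
  exact IntegrableOn.of_bound measure_Icc_lt_top
    ((aestronglyMeasurable_of_eventuallyEq_const hS hf).mul hg.aestronglyMeasurable) B
    (ae_restrict_Icc_of_forall_Ioo_diff hS fun t ht => (Real.norm_eq_abs _).trans_le (hB t ht))

theorem Monotone.intervalIntegrable_comp_mul {H x x' : ℝ → ℝ} {a b C : ℝ} (hH : Monotone H)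
    (hHC : ∀ y, |H y| ≤ C) (hab : a ≤ b) (hx : ContinuousOn x (Icc a b))
    (hint : IntervalIntegrable x' volume a b) :
    IntervalIntegrable (fun t => H (x t) * x' t) volume a b := by
  rw [intervalIntegrable_iff_integrableOn_Ioc_of_le hab] at hint ⊢
  refine hint.bdd_mul ?_ (Eventually.of_forall fun t => hHC (x t))
  exact ((hH.measurable.comp_aemeasurable (hx.aemeasurable measurableSet_Icc)).mono_measure
    (Measure.restrict_mono Ioc_subset_Icc_self le_rfl)).aestronglyMeasurable

theorem Monotone.integral_comp_mul_deriv_off_countable {H x x' : ℝ → ℝ} {a b C : ℝ} {S : Set ℝ}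
    (hH : Monotone H) (hHC : ∀ y, |H y| ≤ C) (hab : a ≤ b) (hS : S.Countable)
    (hx : ContinuousOn x (Icc a b)) (hderiv : ∀ t ∈ Ioo a b \ S, HasDerivAt x (x' t) t)
    (hint : IntervalIntegrable x' volume a b) :
    ∫ t in a..b, H (x t) * x' t = ∫ y in x a..x b, H y := by
  have hHi : ∀ y z : ℝ, IntervalIntegrable H volume y z := fun _ _ => hH.intervalIntegrable
  set G : ℝ → ℝ := fun y => ∫ u in (0 : ℝ)..y, H u
  have hG : LipschitzWith (Real.toNNReal C) G := lipschitzWith_primitive_of_abs_le hHi hHC 0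
  -- `G' = H` off the countably many jumps of `H`; a time at which `x` sits on a jump while
  -- `x' ≠ 0` is isolated, and where `x' = 0` the Lipschitz bound on `G` suffices.
  set bad := S ∪ ⋃ c ∈ {y | ¬ContinuousAt H y}, {t ∈ Ioo a b \ S | x t = c ∧ x' t ≠ 0}
  have hbad : bad.Countable := hS.union <| hH.countable_not_continuousAt.biUnion fun c _ =>
    countable_setOf_eq_of_hasDerivAt_ne_zero hderiv c
  have hderivG : ∀ t ∈ Ioo a b \ bad, HasDerivAt (G ∘ x) (H (x t) * x' t) t := by
    rintro t ⟨ht, htbad⟩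
    have htS : t ∉ S := fun h => htbad (Or.inl h)
    have hxt := hderiv t ⟨ht, htS⟩
    by_cases hx0 : x' t = 0
    · rw [hx0, mul_zero]
      exact hG.hasDerivAt_comp_of_hasDerivAt_zero (hx0 ▸ hxt)
    · have hcont : ContinuousAt H (x t) := by
        by_contra h
        exact htbad (Or.inr (mem_biUnion h ⟨⟨ht, htS⟩, rfl, hx0⟩))
      have hGt := intervalIntegral.integral_hasDerivAt_right (hHi 0 (x t))
        hH.measurable.stronglyMeasurable.stronglyMeasurableAtFilter hcont
      exact hGt.comp t hxt
  have hintH := hH.intervalIntegrable_comp_mul hHC hab hx hint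
  rw [integral_eq_of_hasDerivAt_off_countable_of_le _ _ hab hbad
    (hG.continuous.comp_continuousOn hx) hderivG hintH]
  exact intervalIntegral.integral_interval_sub_left (hHi 0 _) (hHi 0 _)

theorem le_of_hasDerivAt_nonpos_of_lt {x x' : ℝ → ℝ} {a b B : ℝ} {S : Set ℝ} (hab : a ≤ b)
    (hS : S.Countable) (hx : ContinuousOn x (Icc a b))
    (hderiv : ∀ t ∈ Ioo a b \ S, HasDerivAt x (x' t) t) (hint : IntervalIntegrable x' volume a b)
    (hneg : ∀ t ∈ Ioo a b \ S, B < x t → x' t ≤ 0) (ha : x a ≤ B) : x b ≤ B := by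
  by_contra! hb
  -- `H` vanishes up to `B`, so `∫ H (x t) * x' t` only sees times where `x > B` and `x' ≤ 0`,
  -- whereas `∫ y in x a..x b, H y > 0`.
  set H : ℝ → ℝ := fun y => min (max (y - B) 0) 1
  have hH : Monotone H := fun y z hyz => min_le_min_right _ (max_le_max_right _ (by linarith))
  have hHC : ∀ y, |H y| ≤ 1 := fun y => abs_le.2 ⟨by simp [H], min_le_right _ _⟩
  have hH0 : ∀ y ≤ B, H y = 0 := fun y hy => by simp [H, hy]
  have hlhs : ∫ t in a..b, H (x t) * x' t ≤ 0 := by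
    refine (intervalIntegral.integral_mono_ae_restrict hab
      (hH.intervalIntegrable_comp_mul hHC hab hx hint) intervalIntegrable_const
      (ae_restrict_Icc_of_forall_Ioo_diff hS fun t ht => ?_)).trans_eq
      intervalIntegral.integral_zero
    rcases le_or_gt (x t) B with hxt | hxt
    · simp [hH0 _ hxt]
    · exact mul_nonpos_of_nonneg_of_nonpos (by simp [H]) (hneg t ht hxt)
  have hrhs : 0 < ∫ y in x a..x b, H y := by
    rw [← intervalIntegral.integral_add_adjacent_intervals hH.intervalIntegrable
      hH.intervalIntegrable, intervalIntegral.integral_congr (g := 0) fun y hy =>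
        hH0 y (by rw [uIcc_of_le ha] at hy; exact hy.2)]
    simp only [Pi.zero_apply, intervalIntegral.integral_zero, zero_add]
    refine intervalIntegral.intervalIntegral_pos_of_pos_on hH.intervalIntegrable
      (fun y hy => ?_) hb
    simp [H, hy.1]
  linarith [hH.integral_comp_mul_deriv_off_countable hHC hab hS hx hderiv hint]

theorem abs_inv_mul_integral_le {f : ℝ → ℝ} {S : Set ℝ} {B T : ℝ} (hS : S.Countable) (hT : 0 < T)
    (hf : ∀ t ∈ Ioo 0 T \ S, |f t| ≤ B) : |T⁻¹ * ∫ t in 0..T, f t| ≤ B := by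
  have hae : ∀ᵐ t, t ∈ uIoc 0 T → ‖f t‖ ≤ B := by
    filter_upwards [measure_eq_zero_iff_ae_notMem.1 ((hS.insert T).measure_zero volume)]
      with t ht hmem
    rw [uIoc_of_le hT.le] at hmem
    have htT : t ≠ T := fun h => ht (h ▸ mem_insert _ _)
    exact (Real.norm_eq_abs _).trans_le
      (hf t ⟨⟨hmem.1, hmem.2.lt_of_ne htT⟩, fun h => ht (mem_insert_of_mem _ h)⟩)
  have := intervalIntegral.norm_integral_le_of_norm_le_const_ae hae
  rw [Real.norm_eq_abs, sub_zero, abs_of_pos hT] at this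
  rw [abs_mul, abs_inv, abs_of_pos hT, inv_mul_le_iff₀ hT]
  linarith

theorem mul_liminf_average_le {f h : ℝ → ℝ} {a B C : ℝ} (ha : 0 ≤ a) (hf : ∀ t, 0 ≤ f t)
    (hB : ∀ᶠ T in atTop, |T⁻¹ * ∫ t in 0..T, h t| ≤ B)
    (hle : ∀ T, 0 ≤ T → a * ∫ t in 0..T, f t ≤ (∫ t in 0..T, h t) + C) :
    a * liminf (fun T => T⁻¹ * ∫ t in 0..T, f t) atTop
      ≤ liminf (fun T => T⁻¹ * ∫ t in 0..T, h t) atTop := by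
  set l := liminf (fun T => T⁻¹ * ∫ t in 0..T, f t) atTop
  have hfb : IsBoundedUnder (· ≥ ·) atTop fun T => T⁻¹ * ∫ t in 0..T, f t :=
    isBoundedUnder_of_eventually_ge ((eventually_ge_atTop 0).mono fun T hT =>
      mul_nonneg (inv_nonneg.2 hT) (intervalIntegral.integral_nonneg hT fun t _ => hf t))
  have hhb := (isBoundedUnder_le_abs.1 (isBoundedUnder_of_eventually_le hB)).1
  have key : ∀ ε > 0, a * (l - ε) - ε ≤ liminf (fun T => T⁻¹ * ∫ t in 0..T, h t) atTop := by
    intro ε hε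
    refine le_liminf_of_le hhb.isCoboundedUnder_ge ?_
    filter_upwards [eventually_lt_of_lt_liminf (sub_lt_self l hε) hfb,
      eventually_ge_atTop (|C| / ε), eventually_gt_atTop 0] with T hlt hTC hT0
    have hCT : T⁻¹ * C ≤ ε := by
      rw [div_le_iff₀ hε] at hTC
      rw [inv_mul_le_iff₀ hT0]
      linarith [le_abs_self C]
    have hfh : a * (T⁻¹ * ∫ t in 0..T, f t) ≤ T⁻¹ * (∫ t in 0..T, h t) + T⁻¹ * C := by
      rw [mul_left_comm, ← mul_add]
      exact mul_le_mul_of_nonneg_left (hle T hT0.le) (inv_nonneg.2 hT0.le)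
    nlinarith [mul_le_mul_of_nonneg_left hlt.le ha]
  have hlim : Tendsto (fun ε => a * (l - ε) - ε) (𝓝[>] 0) (𝓝 (a * l)) := by
    have : Continuous fun ε : ℝ => a * (l - ε) - ε := by fun_prop
    simpa using (this.tendsto 0).mono_left nhdsWithin_le_nhds
  exact le_of_tendsto hlim (eventually_nhdsWithin_of_forall key)

theorem liminf_average_const_mul {h : ℝ → ℝ} {a B : ℝ} (ha : 0 ≤ a)
    (hB : ∀ᶠ T in atTop, |T⁻¹ * ∫ t in 0..T, h t| ≤ B) :
    liminf (fun T => T⁻¹ * ∫ t in 0..T, a * h t) atTop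
      = a * liminf (fun T => T⁻¹ * ∫ t in 0..T, h t) atTop := by
  obtain ⟨hle, hge⟩ := isBoundedUnder_le_abs.1 (isBoundedUnder_of_eventually_le hB)
  simp_rw [intervalIntegral.integral_const_mul, mul_left_comm _ a]
  exact ((monotone_mul_left_of_nonneg ha).map_liminf_of_continuousAt _
    (continuous_const_mul a).continuousAt hle.isCoboundedUnder_ge hge).symm

noncomputable section

variable {V D : ℕ → ℝ} {K j : ℕ} {g r y : ℝ}

def countBelow (V : ℕ → ℝ) (K : ℕ) (y : ℝ) : ℕ := ((Finset.range K).filter (V · < y)).card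

theorem countBelow_mono : Monotone (countBelow V K) := fun y z hyz =>
  Finset.card_le_card fun k hk => by
    simp only [Finset.mem_filter] at hk ⊢
    exact ⟨hk.1, hk.2.trans_le hyz⟩

theorem countBelow_le_card : countBelow V K y ≤ K :=
  (Finset.card_filter_le _ _).trans (Finset.card_range K).le

theorem countBelow_le (hV : MonotoneOn V (Iic (K - 1))) (hj : j < K) (hy : y ≤ V j) :
    countBelow V K y ≤ j := by
  refine (Finset.card_le_card fun k hk => ?_).trans (Finset.card_range j).le
  simp only [Finset.mem_filter, Finset.mem_range] at hk ⊢
  by_contra! hjk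
  exact (hk.2.trans_le hy).not_ge (hV (by simp; omega) (by simp; omega) hjk)

theorem lt_countBelow (hV : MonotoneOn V (Iic (K - 1))) (hj : j < K) (hy : V j < y) :
    j < countBelow V K y := by
  refine Nat.succ_le_iff.1 ((Finset.card_range (j + 1)).symm.trans_le
    (Finset.card_le_card fun k hk => ?_))
  simp only [Finset.mem_filter, Finset.mem_range] at hk ⊢
  exact ⟨by omega, (hV (by simp; omega) (by simp; omega) (by omega)).trans_lt hy⟩

def gapLevel (D : ℕ → ℝ) (K : ℕ) (g : ℝ) (k : ℕ) : ℝ :=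
  if k < K then D k - g / 2 else D (K - 1) + g / 2

theorem gapLevel_mono (hg : 0 ≤ g) (hD : ∀ k, k + 1 < K → D k + g ≤ D (k + 1)) :
    Monotone (gapLevel D K g) := by
  refine monotone_nat_of_le_succ fun k => ?_
  unfold gapLevel
  split_ifs with h1 h2 h2
  · linarith [hD k h2]
  · obtain rfl : k = K - 1 := by omega
    linarith
  · omega
  · exact le_rfl

theorem add_half_le_gapLevel_succ (hD : ∀ k, k + 1 < K → D k + g ≤ D (k + 1)) (hj : j < K) :
    D j + g / 2 ≤ gapLevel D K g (j + 1) := by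
  unfold gapLevel
  split_ifs with h
  · linarith [hD j h]
  · obtain rfl : j = K - 1 := by omega
    exact le_rfl

/-- The step function equal to `D j - g / 2` on `(V (j - 1), V j]` and to `D (K - 1) + g / 2`
above `V (K - 1)`. -/
def gapStep (V D : ℕ → ℝ) (K : ℕ) (g y : ℝ) : ℝ := gapLevel D K g (countBelow V K y)

theorem gapStep_mono (hg : 0 ≤ g) (hD : ∀ k, k + 1 < K → D k + g ≤ D (k + 1)) :
    Monotone (gapStep V D K g) :=
  (gapLevel_mono hg hD).comp countBelow_mono

theorem abs_gapStep_le (hg : 0 ≤ g) (hD : ∀ k, k + 1 < K → D k + g ≤ D (k + 1)) :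
    |gapStep V D K g y| ≤ |gapLevel D K g 0| + |gapLevel D K g K| := by
  have hlo := gapLevel_mono hg hD (Nat.zero_le (countBelow V K y))
  have hhi := gapLevel_mono hg hD (countBelow_le_card (V := V) (K := K) (y := y))
  rw [abs_le]
  constructor <;> unfold gapStep <;>
    linarith [neg_abs_le (gapLevel D K g 0), le_abs_self (gapLevel D K g K),
      abs_nonneg (gapLevel D K g 0), abs_nonneg (gapLevel D K g K)]

theorem gapStep_le (hV : MonotoneOn V (Iic (K - 1))) (hg : 0 ≤ g)
    (hD : ∀ k, k + 1 < K → D k + g ≤ D (k + 1)) (hj : j < K) (hy : y ≤ V j) :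
    gapStep V D K g y ≤ D j - g / 2 :=
  (gapLevel_mono hg hD (countBelow_le hV hj hy)).trans_eq (if_pos hj)

theorem le_gapStep (hV : MonotoneOn V (Iic (K - 1))) (hg : 0 ≤ g)
    (hD : ∀ k, k + 1 < K → D k + g ≤ D (k + 1)) (hj : j < K) (hy : V j < y) :
    D j + g / 2 ≤ gapStep V D K g y :=
  (add_half_le_gapLevel_succ hD hj).trans (gapLevel_mono hg hD (lt_countBelow hV hj hy))

theorem half_gap_mul_abs_add_gapStep_mul_le (hV : MonotoneOn V (Iic (K - 1))) (hg : 0 ≤ g)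
    (hD : ∀ k, k + 1 < K → D k + g ≤ D (k + 1)) (hj : j < K) (hr : 0 ≤ r) :
    g / 2 * |r * (V j - y)| + gapStep V D K g y * (r * (V j - y)) ≤ D j * (r * (V j - y)) := by
  rcases lt_trichotomy y (V j) with hy | rfl | hy
  · have hz : 0 ≤ r * (V j - y) := mul_nonneg hr (by linarith)
    rw [abs_of_nonneg hz]
    nlinarith [gapStep_le hV hg hD hj hy.le]
  · simp
  · have hz : r * (V j - y) ≤ 0 := mul_nonpos_of_nonneg_of_nonpos hr (by linarith)
    rw [abs_of_nonpos hz]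
    nlinarith [le_gapStep hV hg hD hj hy]

end

theorem countable_inter_Ici_of_finite {S : Set ℝ} (hS : ∀ T : ℝ, (S ∩ Icc 0 T).Finite) :
    (S ∩ Ici 0).Countable := by
  refine (countable_iUnion fun N : ℕ => (hS N).countable).mono fun t ht => ?_
  exact mem_iUnion.2 ⟨⌈t⌉₊, ht.1, ht.2, Nat.le_ceil t⟩

theorem forall_mem_Ioo_diff_inter_Ici {p : ℝ → Prop} {S : Set ℝ} {T : ℝ}
    (h : ∀ t, 0 ≤ t → t ∉ S → p t) : ∀ t ∈ Ioo 0 T \ (S ∩ Ici 0), p t :=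
  fun t ht => h t ht.1.1.le fun hS => ht.2 ⟨hS, ht.1.1.le⟩

theorem monotoneOn_Iic_of_lt_succ {f : ℕ → ℝ} {K : ℕ} (hf : ∀ k, k + 1 < K → f k < f (k + 1)) :
    MonotoneOn f (Iic (K - 1)) :=
  (strictMonoOn_Iic_of_lt_succ fun k hk => hf k (by omega)).monotoneOn

theorem MonotoneOn.mem_Icc_of_lt {f : ℕ → ℝ} {K k : ℕ} (hf : MonotoneOn f (Iic (K - 1)))
    (hk : k < K) : f k ∈ Icc (f 0) (f (K - 1)) := by
  have hk' : k ∈ Iic (K - 1) := by rw [mem_Iic]; omega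
  exact ⟨hf (by simp) hk' k.zero_le, hf hk' (by simp) hk'⟩

theorem mem_Icc_and_le_sub_of_state {vmk vMk : ℕ → ℝ} {K : ℕ} {a b : ℝ}
    (hmono : ∀ k, k + 1 < K → vmk k < vmk (k + 1))
    (hDmono : ∀ k, k + 1 < K → vMk k - vmk k < vMk (k + 1) - vmk (k + 1))
    (h : ∃ k < K, a = vmk k ∧ b = vMk k) :
    a ∈ Icc (vmk 0) (vmk (K - 1)) ∧ vMk 0 - vmk 0 ≤ b - a := by
  obtain ⟨k, hk, rfl, rfl⟩ := h
  exact ⟨(monotoneOn_Iic_of_lt_succ hmono).mem_Icc_of_lt hk,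
    ((monotoneOn_Iic_of_lt_succ (f := fun k => vMk k - vmk k) hDmono).mem_Icc_of_lt hk).1⟩

theorem abs_sub_le_of_state {vmk vMk : ℕ → ℝ} {K : ℕ} {x a b : ℝ}
    (hV : MonotoneOn vmk (Iic (K - 1))) (hx : x ∈ Icc (vmk 0) (vmk (K - 1)))
    (h : ∃ k < K, a = vmk k ∧ b = vMk k) : |x - a| ≤ vmk (K - 1) - vmk 0 := by
  obtain ⟨k, hk, rfl, -⟩ := h
  exact (Real.dist_eq _ _).symm.trans_le (Real.dist_le_of_mem_Icc hx (hV.mem_Icc_of_lt hk))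

theorem abs_relaxation_le {x v d c δ W : ℝ} (hc : 0 ≤ c) (hδ : 0 < δ) (hd : δ ≤ d)
    (hW : |x - v| ≤ W) : |-c * ((x - v) / d)| ≤ c / δ * W := by
  rw [neg_mul, abs_neg, abs_mul, abs_div, abs_of_nonneg hc, abs_of_pos (hδ.trans_le hd),
    mul_div_assoc', div_mul_eq_mul_div]
  calc c * |x - v| / d ≤ c * |x - v| / δ := by gcongr
    _ ≤ c * W / δ := by gcongr

theorem abs_mul_relaxation_le {x v d c W : ℝ} (hc : 0 ≤ c) (hd : d ≠ 0) (hW : |x - v| ≤ W) :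
    |d * (-c * ((x - v) / d))| ≤ c * W := by
  rw [mul_div_assoc', mul_div_assoc', mul_div_cancel_left₀ _ hd, neg_mul, abs_neg, abs_mul,
    abs_of_nonneg hc]
  exact mul_le_mul_of_nonneg_left hW hc

theorem relaxation_mem_Icc {x x' v d : ℝ → ℝ} {S : Set ℝ} {c δ lo hi T : ℝ} (hc : 0 ≤ c)
    (hδ : 0 < δ) (hS : (S ∩ Ici 0).Countable) (hx : ContinuousOn x (Ici 0))
    (hderiv : ∀ t, 0 ≤ t → t ∉ S → HasDerivAt x (x' t) t)
    (hform : ∀ t, 0 ≤ t → t ∉ S → x' t = -c * ((x t - v t) / d t))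
    (hd : ∀ t, 0 ≤ t → δ ≤ d t) (hv : ∀ t, 0 ≤ t → v t ∈ Icc lo hi)
    (hx0 : x 0 ∈ Icc lo hi) (hT : 0 ≤ T) : x T ∈ Icc lo hi := by
  have hxT : ContinuousOn x (Icc 0 T) := hx.mono Icc_subset_Ici_self
  have hderiv' := forall_mem_Ioo_diff_inter_Ici (T := T) hderiv
  have hform' := forall_mem_Ioo_diff_inter_Ici (T := T) hform
  obtain ⟨R, hR⟩ := isCompact_Icc.exists_bound_of_continuousOn hxT
  have hint : IntervalIntegrable x' volume 0 T := by
    refine intervalIntegrable_of_hasDerivAt_of_abs_le (C := c / δ * (R + max |lo| |hi|)) hT hS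
      hderiv' fun t ht => ?_
    have ht0 : 0 ≤ t := ht.1.1.le
    have hxt := (Real.norm_eq_abs _).symm.trans_le (hR t (Ioo_subset_Icc_self ht.1))
    rw [hform' t ht]
    exact abs_relaxation_le hc hδ (hd t ht0) ((abs_sub _ _).trans
      (add_le_add hxt (abs_le_max_abs_abs (hv t ht0).1 (hv t ht0).2)))
  have hsign : ∀ t ∈ Ioo 0 T \ (S ∩ Ici 0), (v t < x t → x' t ≤ 0) ∧ (x t < v t → 0 ≤ x' t) := by
    intro t ht
    rw [hform' t ht]
    have hdt := hδ.trans_le (hd t ht.1.1.le)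
    exact ⟨fun h => by nlinarith [div_pos (sub_pos.2 h) hdt],
      fun h => by nlinarith [div_neg_of_neg_of_pos (sub_neg.2 h) hdt]⟩
  constructor
  · have := le_of_hasDerivAt_nonpos_of_lt (x := fun t => -x t) (x' := fun t => -x' t) (B := -lo)
      hT hS hxT.neg (fun t ht => (hderiv' t ht).neg) hint.neg
      (fun t ht hlt => neg_nonpos.2 ((hsign t ht).2 (by linarith [(hv t ht.1.1.le).1])))
      (neg_le_neg hx0.1)
    exact neg_le_neg_iff.1 this
  · exact le_of_hasDerivAt_nonpos_of_lt hT hS hxT hderiv' hint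
      (fun t ht hlt => (hsign t ht).1 (by linarith [(hv t ht.1.1.le).2])) hx0.2

theorem integral_half_gap_add_gapStep_le {x xd vm vM : ℝ → ℝ} {S : Set ℝ} {vmk vMk : ℕ → ℝ}
    {K : ℕ} {c g T : ℝ} (hV : MonotoneOn vmk (Iic (K - 1))) (hg : 0 ≤ g)
    (hgap : ∀ k, k + 1 < K → vMk k - vmk k + g ≤ vMk (k + 1) - vmk (k + 1)) (hc : 0 ≤ c)
    (hT : 0 ≤ T) (hS : S.Countable) (hx : ContinuousOn x (Icc 0 T))
    (hform : ∀ t ∈ Ioo 0 T \ S, xd t = -c * ((x t - vm t) / (vM t - vm t)))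
    (hstate : ∀ t ∈ Ioo 0 T \ S, ∃ k < K, vm t = vmk k ∧ vM t = vMk k)
    (hwidth : ∀ t ∈ Ioo 0 T \ S, 0 < vM t - vm t) (hint : IntervalIntegrable xd volume 0 T)
    (hdint : IntervalIntegrable (fun t => (vM t - vm t) * xd t) volume 0 T) :
    g / 2 * (∫ t in 0..T, |xd t|)
        + ∫ t in 0..T, gapStep vmk (fun k => vMk k - vmk k) K g (x t) * xd t
      ≤ ∫ t in 0..T, (vM t - vm t) * xd t := by
  have hHint := (gapStep_mono (V := vmk) hg hgap).intervalIntegrable_comp_mul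
    (fun y => abs_gapStep_le hg hgap) hT hx hint
  rw [← intervalIntegral.integral_const_mul, ← intervalIntegral.integral_add
    (hint.abs.const_mul _) hHint]
  refine intervalIntegral.integral_mono_ae_restrict hT ((hint.abs.const_mul _).add hHint) hdint
    (ae_restrict_Icc_of_forall_Ioo_diff hS fun t ht => ?_)
  obtain ⟨k, hk, hvm, hvM⟩ := hstate t ht
  have hrel : xd t = c / (vM t - vm t) * (vm t - x t) := by rw [hform t ht]; ring
  have hr := div_nonneg hc (hwidth t ht).le
  rw [hvm, hvM] at hr
  dsimp only
  rw [hrel, hvm, hvM]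
  exact half_gap_mul_abs_add_gapStep_mul_le hV hg hgap hk hr

theorem exists_half_gap_mul_integral_abs_le {x xd vm vM : ℝ → ℝ} {S : Set ℝ} {vmk vMk : ℕ → ℝ}
    {K : ℕ} {c δ g : ℝ} (hV : MonotoneOn vmk (Iic (K - 1))) (hg : 0 ≤ g)
    (hgap : ∀ k, k + 1 < K → vMk k - vmk k + g ≤ vMk (k + 1) - vmk (k + 1)) (hc : 0 ≤ c)
    (hδ : 0 < δ) (hS : (S ∩ Ici 0).Countable)
    (hx : ContinuousOn x (Ici 0)) (hxI : ∀ t, 0 ≤ t → x t ∈ Icc (vmk 0) (vmk (K - 1)))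
    (hderiv : ∀ t, 0 ≤ t → t ∉ S → HasDerivAt x (xd t) t)
    (hform : ∀ t, 0 ≤ t → t ∉ S → xd t = -c * ((x t - vm t) / (vM t - vm t)))
    (hstate : ∀ t, 0 ≤ t → ∃ k < K, vm t = vmk k ∧ vM t = vMk k)
    (hwidth : ∀ t, 0 ≤ t → δ ≤ vM t - vm t)
    (hpc : ∀ t, 0 ≤ t → t ∉ S → ∀ᶠ s in 𝓝 t, vm s = vm t ∧ vM s = vM t) :
    ∃ C, ∀ T, 0 ≤ T → g / 2 * ∫ t in 0..T, |xd t| ≤ (∫ t in 0..T, (vM t - vm t) * xd t) + C := by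
  set H := gapStep vmk (fun k => vMk k - vmk k) K g
  set M := |gapLevel (fun k => vMk k - vmk k) K g 0| + |gapLevel (fun k => vMk k - vmk k) K g K|
  have hHM : ∀ y, |H y| ≤ M := fun y => abs_gapStep_le hg hgap
  have hW := fun t ht => abs_sub_le_of_state hV (hxI t ht) (hstate t ht)
  refine ⟨M * (vmk (K - 1) - vmk 0), fun T hT => ?_⟩
  have hxT : ContinuousOn x (Icc 0 T) := hx.mono Icc_subset_Ici_self
  have hint : IntervalIntegrable xd volume 0 T :=
    intervalIntegrable_of_hasDerivAt_of_abs_le hT hS (forall_mem_Ioo_diff_inter_Ici hderiv)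
      (forall_mem_Ioo_diff_inter_Ici fun t ht htS => by
        rw [hform t ht htS]; exact abs_relaxation_le hc hδ (hwidth t ht) (hW t ht))
  have hdint : IntervalIntegrable (fun t => (vM t - vm t) * xd t) volume 0 T := by
    refine hint.mul_of_eventuallyEq_const (B := c * (vmk (K - 1) - vmk 0)) hT hS
      (forall_mem_Ioo_diff_inter_Ici fun t ht htS =>
        (hpc t ht htS).mono fun s hs => by rw [hs.1, hs.2])
      (forall_mem_Ioo_diff_inter_Ici fun t ht htS => ?_)
    rw [hform t ht htS]
    exact abs_mul_relaxation_le hc (hδ.trans_le (hwidth t ht)).ne' (hW t ht)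
  have hchange := (gapStep_mono hg hgap).integral_comp_mul_deriv_off_countable hHM hT hS hxT
    (forall_mem_Ioo_diff_inter_Ici hderiv) hint
  have hbound : |∫ y in x 0..x T, H y| ≤ M * (vmk (K - 1) - vmk 0) := by
    refine (intervalIntegral.norm_integral_le_of_norm_le_const fun y _ =>
      (Real.norm_eq_abs _).trans_le (hHM y)).trans (mul_le_mul_of_nonneg_left ?_ ?_)
    · exact (Real.dist_eq _ _).symm.trans_le (Real.dist_le_of_mem_Icc (hxI T hT) (hxI 0 le_rfl))
    · exact (abs_nonneg _).trans (hHM 0)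
  have := integral_half_gap_add_gapStep_le hV hg hgap hc hT hS hxT
    (forall_mem_Ioo_diff_inter_Ici hform) (forall_mem_Ioo_diff_inter_Ici fun t ht _ => hstate t ht)
    (forall_mem_Ioo_diff_inter_Ici fun t ht _ => hδ.trans_le (hwidth t ht)) hint hdint
  linarith [(abs_le.1 hbound).1]

theorem revenue_inequivalence_increasing_general (n K : ℕ) (hn : 2 ≤ n)
    (vmk vMk : ℕ → ℝ)
    (hlt : ∀ k < K, vmk k < vMk k)
    (hmono : ∀ k, k + 1 < K → vmk k < vmk (k + 1))
    (hDmono : ∀ k, k + 1 < K → vMk k - vmk k < vMk (k + 1) - vmk (k + 1))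
    (vm vM : ℝ → ℝ)
    (hstate : ∀ t, 0 ≤ t → ∃ k < K, vm t = vmk k ∧ vM t = vMk k)
    (S : Set ℝ)
    (hSfin : ∀ T : ℝ, (S ∩ Set.Icc 0 T).Finite)
    (hpc : ∀ t, 0 ≤ t → t ∉ S → ∀ᶠ s in nhds t, vm s = vm t ∧ vM s = vM t)
    (x xd : ℝ → ℝ)
    (hx : ContinuousOn x (Set.Ici 0))
    (hode : ∀ t, 0 ≤ t → t ∉ S → HasDerivAt x (xd t) t)
    (hform : ∀ t, 0 ≤ t → t ∉ S →
      xd t = -(1 / ((n : ℝ) * ((n : ℝ) - 1))) * ((x t - vm t) / (vM t - vm t)))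
    (hx0 : x 0 ∈ Set.Icc (vmk 0) (vmk (K - 1)))
    (g : ℝ)
    (hg : IsLeast ((fun k => (vMk (k + 1) - vmk (k + 1)) - (vMk k - vmk k)) ''
      {k | k + 1 < K}) g)
    (L : ℝ) (hLpos : 0 < L)
    (hL : liminf (fun T : ℝ => T⁻¹ * ∫ t in (0:ℝ)..T, |xd t|) atTop = L) :
    (0 < L / 2 * g
      ∧ L / 2 * g ≤ liminf (fun T : ℝ => T⁻¹ * ∫ t in (0:ℝ)..T, (vM t - vm t) * xd t) atTop)
    ∧ 0 < liminf (fun T : ℝ =>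
        T⁻¹ * ∫ t in (0:ℝ)..T, ((n : ℝ) - 1) / (n : ℝ) * ((vM t - vm t) * xd t)) atTop := by
  have hn' : (2 : ℝ) ≤ n := by exact_mod_cast hn
  set c : ℝ := 1 / ((n : ℝ) * ((n : ℝ) - 1))
  have hc : 0 < c := one_div_pos.2 (by nlinarith)
  have ha : 0 < ((n : ℝ) - 1) / n := div_pos (by linarith) (by linarith)
  have hgap : ∀ k, k + 1 < K → vMk k - vmk k + g ≤ vMk (k + 1) - vmk (k + 1) := fun k hk => by
    linarith [hg.2 ⟨k, hk, rfl⟩]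
  have hg0 : 0 < g := by obtain ⟨k, hk, rfl⟩ := hg.1; linarith [hDmono k hk]
  have hD0 : 0 < vMk 0 - vmk 0 := by
    obtain ⟨k, hk, -⟩ := hstate 0 le_rfl
    exact sub_pos.2 (hlt 0 (by omega))
  have hV := monotoneOn_Iic_of_lt_succ hmono
  have hS := countable_inter_Ici_of_finite hSfin
  have hrange := fun t ht => mem_Icc_and_le_sub_of_state hmono hDmono (hstate t ht)
  have hxI : ∀ t, 0 ≤ t → x t ∈ Icc (vmk 0) (vmk (K - 1)) := fun t ht =>
    relaxation_mem_Icc hc.le hD0 hS hx hode hform (fun t ht => (hrange t ht).2)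
      (fun t ht => (hrange t ht).1) hx0 ht
  obtain ⟨C, hC⟩ := exists_half_gap_mul_integral_abs_le hV hg0.le hgap hc.le hD0 hS hx hxI
    hode hform hstate (fun t ht => (hrange t ht).2) hpc
  have hF : ∀ᶠ T in atTop, |T⁻¹ * ∫ t in (0:ℝ)..T, (vM t - vm t) * xd t|
      ≤ c * (vmk (K - 1) - vmk 0) :=
    (eventually_gt_atTop 0).mono fun T hT => abs_inv_mul_integral_le hS hT
      (forall_mem_Ioo_diff_inter_Ici fun t ht htS => by
        rw [hform t ht htS]
        exact abs_mul_relaxation_le hc.le (hD0.trans_le (hrange t ht).2).ne'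
          (abs_sub_le_of_state hV (hxI t ht) (hstate t ht)))
  have h1 := hL ▸ mul_liminf_average_le (by positivity) (fun t => abs_nonneg (xd t)) hF hC
  rw [liminf_average_const_mul ha.le hF]
  exact ⟨⟨by positivity, by linarith⟩, mul_pos ha (by nlinarith)⟩

/-- Revenue inequivalence under monotonic increase of the interval widths
`Δv^(k)`: if the time-average path length of the adaptive dynamics has
`liminf = L > 0`, then the time-averaged revenue difference
`(1/T) ∫_0^T Δv(t) x'(t) dt` has `liminf ≥ (L/2) min_k (Δv^(k+1) - Δv^(k)) > 0`,
so the time-averaged first-price payoff strictly exceeds the second-price one. -/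
theorem revenue_inequivalence_increasing (n K : ℕ) (hn : 2 ≤ n) (hK : 2 ≤ K)
    (vmk vMk : ℕ → ℝ)
    (hlt : ∀ k < K, vmk k < vMk k)
    (hmono : ∀ k, k + 1 < K → vmk k < vmk (k + 1))
    (hDmono : ∀ k, k + 1 < K → vMk k - vmk k < vMk (k + 1) - vmk (k + 1))
    (vm vM : ℝ → ℝ)
    (hstate : ∀ t, 0 ≤ t → ∃ k < K, vm t = vmk k ∧ vM t = vMk k)
    (S : Set ℝ)
    (hSfin : ∀ T : ℝ, (S ∩ Set.Icc 0 T).Finite)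
    (hpc : ∀ t, 0 ≤ t → t ∉ S → ∀ᶠ s in nhds t, vm s = vm t ∧ vM s = vM t)
    (x xd : ℝ → ℝ)
    (hx : ContinuousOn x (Set.Ici 0))
    (hode : ∀ t, 0 ≤ t → t ∉ S → HasDerivAt x (xd t) t)
    (hform : ∀ t, 0 ≤ t → t ∉ S →
      xd t = -(1 / ((n : ℝ) * ((n : ℝ) - 1))) * ((x t - vm t) / (vM t - vm t)))
    (hx0 : x 0 ∈ Set.Icc (vmk 0) (vmk (K - 1)))
    (g : ℝ)
    (hg : IsLeast ((fun k => (vMk (k + 1) - vmk (k + 1)) - (vMk k - vmk k)) ''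
      {k | k + 1 < K}) g)
    (L : ℝ) (hLpos : 0 < L)
    (hL : liminf (fun T : ℝ => T⁻¹ * ∫ t in (0:ℝ)..T, |xd t|) atTop = L) :
    (0 < L / 2 * g
      ∧ L / 2 * g ≤ liminf (fun T : ℝ => T⁻¹ * ∫ t in (0:ℝ)..T, (vM t - vm t) * xd t) atTop)
    ∧ 0 < liminf (fun T : ℝ =>
        T⁻¹ * ∫ t in (0:ℝ)..T, ((n : ℝ) - 1) / (n : ℝ) * ((vM t - vm t) * xd t)) atTop :=
  revenue_inequivalence_increasing_general n K hn vmk vMk hlt hmono hDmono vm vM hstate S hSfin hpc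
    x xd hx hode hform hx0 g hg L hLpos hL
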